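/- Fix c ≥ 2 and let u = I_c^{e_1} D_c^{e_2} I_c^{e_3} ... L_c^{e_n} with all e_i > 0 (L = I if n odd, D if n even). Let A = sum of e_i over odd i, B = sum of e_i over even i, M = max(A,B), m = min(A,B). Then l(u) = (c-1)m + M + floor(n/2). -/

import Mathlib

/-- The increasing sequence `1 2 ... c`. -/
def Ic (c : ℕ) : List ℕ := List.range' 1 c

/-- The decreasing sequence `c (c-1) ... 1`. -/
def Dc (c : ℕ) : List ℕ := (Ic c).reverse

/-- `k` concatenated copies of the list `l`. -/
def rep (l : List ℕ) (k : ℕ) : List ℕ := (List.replicate k l).flatten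

/-- `up(c,t)`: the sequence `1 2 ... c` repeated `t` times. -/
def upSeq (c t : ℕ) : List ℕ := rep (Ic c) t

/-- `alt(c,k)`: the concatenation of `k` permutations alternating `I_c, D_c, I_c, ...`. -/
def altSeq (c k : ℕ) : List ℕ :=
  ((List.range k).map (fun i => if i % 2 = 0 then Ic c else Dc c)).flatten

/-- A sequence `s` contains `u` if some subsequence of `s` is obtained from `u`
by an injective renaming of its letters. -/
def Contains (s u : List ℕ) : Prop :=
  ∃ f : ℕ → ℕ, Function.Injective f ∧ (u.map f).Sublist s

/-- `F` is an `(r,s)`-formation: a concatenation of `s` permutations of a set of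
`r` distinct letters. -/
def IsFormation (r s : ℕ) (F : List ℕ) : Prop :=
  ∃ (A : Finset ℕ) (ps : List (List ℕ)), A.card = r ∧ ps.length = s ∧
    (∀ p ∈ ps, p.Nodup ∧ p.toFinset = A) ∧ F = ps.flatten

/-- `F` is a binary `(r,s)`-formation: an `(r,s)`-formation in which every
constituent permutation equals a fixed permutation `p` or its reverse. -/
def IsBinaryFormation (r s : ℕ) (F : List ℕ) : Prop :=
  ∃ (A : Finset ℕ) (p : List ℕ) (ps : List (List ℕ)), A.card = r ∧
    p.Nodup ∧ p.toFinset = A ∧ ps.length = s ∧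
    (∀ q ∈ ps, q = p ∨ q = p.reverse) ∧ F = ps.flatten

/-- The formation width of `u`: the minimum `s` such that there exists `r` for which
every `(r,s)`-formation contains `u`. -/
noncomputable def fw (u : List ℕ) : ℕ :=
  sInf {s | ∃ r, ∀ F, IsFormation r s F → Contains F u}

/-- The formation length of `u`: the minimum `r` such that every `(r, fw u)`-formation
contains `u`. -/
noncomputable def fl (u : List ℕ) : ℕ :=
  sInf {r | ∀ F, IsFormation r (fw u) F → Contains F u}

/-- For a permutation `π` of `{1,...,c}`, the sequence `I_π = π(1) π(2) ... π(c)`. -/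
def Iperm {c : ℕ} (π : Equiv.Perm (Fin c)) : List ℕ :=
  List.ofFn (fun i => (π i).val + 1)

/-- `l(u)` for a sequence `u` on letters `1,...,c`: the smallest `k` such that
`up(c,k)` contains `u`. -/
noncomputable def lval (c : ℕ) (u : List ℕ) : ℕ := sInf {k | Contains (upSeq c k) u}

/-- `r(u)` for a sequence `u` on letters `1,...,c`: the smallest `k` such that
`alt(c,k)` contains `u`. -/
noncomputable def rval (c : ℕ) (u : List ℕ) : ℕ := sInf {k | Contains (altSeq c k) u}

/-- The binary formation `I_c^{e_1} D_c^{e_2} I_c^{e_3} ...` determined by the list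
of exponents `e` (blocks alternate starting with `I_c`). -/
def altBlocks (c : ℕ) (e : List ℕ) : List ℕ :=
  ((e.zipIdx.map Prod.swap).map (fun p => rep (if p.1 % 2 = 0 then Ic c else Dc c) p.2)).flatten

/-!
Reading a word over `{1, …, c}` from left to right, a greedy embedding into `I_c^k` opens a new
copy of `I_c` exactly at the weak descents of the word (letters `≤` their predecessor, the first
letter always counting), so the word embeds into `I_c^k` iff it has at most `k` weak descents.

An injective renaming sends `I_c^{e_1} D_c^{e_2} ⋯` to `U^{e_1} V^{e_2} ⋯`, where `U` is a
permutation of `{1, …, c}` and `V` its reverse. The letter before each block is its head (or `c`),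
so every copy of `U` costs the number `x` of cyclic weak descents of `U`, every copy of `V` costs
`y`, and each block additionally costs one when the wrap-around step from its last letter to its
head is an ascent. Now `x + y = c`, `x, y ≥ 1`, and exactly one of `U`, `V` has an ascending
wrap-around step; since odd-numbered blocks are at least as many as even-numbered ones, the cost is
at least `(c - 1) m + M + ⌊n/2⌋`. This is attained by `U = I_c` when `B ≤ A` and by
`U = (c-1) ⋯ 2 1 c` when `A ≤ B`.
-/

namespace List

variable {α : Type*}

lemma getLastD_eq_of_ne_nil {l : List α} (hl : l ≠ []) (a b : α) :
    l.getLastD a = l.getLastD b := by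
  simp [getLastD_eq_getLast?, getLast?_eq_some_getLast hl]

lemma getLastD_mem {l : List α} (hl : l ≠ []) (a : α) : l.getLastD a ∈ l := by
  simp [getLastD_eq_getLast?, getLast?_eq_some_getLast hl]

lemma headD_reverse (l : List α) (a : α) : l.reverse.headD a = l.getLastD a := by
  simp [getLastD_eq_getLast?]

lemma getLastD_reverse (l : List α) (a : α) : l.reverse.getLastD a = l.headD a := by
  simp [getLastD_eq_getLast?]

lemma range'_eq_append_cons {s n b : ℕ} (hsb : s ≤ b) (hbn : b < s + n) :
    range' s n = range' s (b - s) ++ b :: range' (b + 1) (s + n - (b + 1)) := by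
  have h := range'_append (s := s) (m := b - s) (n := s + n - (b + 1) + 1) (step := 1)
  rw [show s + 1 * (b - s) = b by omega, show b - s + (s + n - (b + 1) + 1) = n by omega] at h
  rw [← range'_succ, h]

end List

def weakDescents : ℕ → List ℕ → ℕ
  | _, [] => 0
  | p, a :: w => (if a ≤ p then 1 else 0) + weakDescents a w

section WeakDescents

lemma weakDescents_append (p : ℕ) (x y : List ℕ) :
    weakDescents p (x ++ y) = weakDescents p x + weakDescents (x.getLastD p) y := by
  induction x generalizing p with
  | nil => simp [weakDescents]
  | cons a x ih => simp only [List.cons_append, weakDescents, ih, List.getLastD_cons]; omega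

lemma weakDescents_eq_zero_of_pairwise {p : ℕ} {w : List ℕ} (h : (p :: w).Pairwise (· < ·)) :
    weakDescents p w = 0 := by
  induction w generalizing p with
  | nil => rfl
  | cons a w ih =>
    rw [List.pairwise_cons] at h
    simp [weakDescents, h.1 a (by simp), ih h.2]

lemma lt_of_weakDescents_eq_zero {p : ℕ} {w : List ℕ} (h : weakDescents p w = 0) :
    ∀ x ∈ w, p < x := by
  induction w generalizing p with
  | nil => simp
  | cons a w ih =>
    simp only [weakDescents] at h
    have hpa : p < a := by by_contra! hap; simp [hap] at h
    rintro x (_ | ⟨_, hx⟩)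
    · exact hpa
    · exact hpa.trans (ih (by omega) x hx)

lemma weakDescents_le_add (p a : ℕ) (w : List ℕ) :
    weakDescents p w ≤ (if a ≤ p then 1 else 0) + weakDescents a w := by
  cases w with
  | nil => simp [weakDescents]
  | cons b w => simp only [weakDescents]; split_ifs <;> omega

lemma weakDescents_mono {w₁ w₂ : List ℕ} (h : w₁.Sublist w₂) (p : ℕ) :
    weakDescents p w₁ ≤ weakDescents p w₂ := by
  induction h generalizing p with
  | slnil => rfl
  | cons a _ ih =>
    have := ih a
    exact (weakDescents_le_add p a _).trans (by simp only [weakDescents]; omega)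
  | cons_cons a _ ih => have := ih a; simp only [weakDescents]; omega

lemma weakDescents_range' {p s n : ℕ} (hs : s ≤ p) (hn : 0 < n) :
    weakDescents p (List.range' s n) = 1 := by
  obtain ⟨n, rfl⟩ := Nat.exists_eq_add_one_of_ne_zero hn.ne'
  have hsorted : (s :: List.range' (s + 1) n).Pairwise (· < ·) := by
    rw [← List.range'_succ]; exact List.pairwise_lt_range'
  rw [List.range'_succ, weakDescents, if_pos hs, weakDescents_eq_zero_of_pairwise hsorted]

end WeakDescents

section UpSeq

lemma rep_succ (l : List ℕ) (k : ℕ) : rep l (k + 1) = l ++ rep l k := by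
  simp [rep, List.replicate_succ]

lemma upSeq_succ (c k : ℕ) : upSeq c (k + 1) = Ic c ++ upSeq c k := rep_succ _ _

lemma map_rep (f : ℕ → ℕ) (l : List ℕ) (k : ℕ) : (rep l k).map f = rep (l.map f) k := by
  simp [rep, List.map_flatten]

lemma getLastD_Ic {c : ℕ} (hc : 1 ≤ c) (a : ℕ) : (Ic c).getLastD a = c := by
  simp [Ic, List.getLastD_eq_getLast?, List.getLast?_range', Nat.pos_iff_ne_zero.1 hc]

lemma weakDescents_upSeq {c p : ℕ} (hc : 1 ≤ c) (hp : 1 ≤ p) (k : ℕ) :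
    weakDescents p (upSeq c k) = k := by
  induction k generalizing p with
  | zero => rfl
  | succ k ih =>
    rw [upSeq_succ, weakDescents_append, getLastD_Ic hc, ih hc,
      Ic, weakDescents_range' hp hc]
    omega

/-- The greedy embedding: after the letter `p`, the rest `p+1, …, c` of the current copy of `I_c`
is still available. -/
lemma sublist_range'_append_upSeq {c : ℕ} {w : List ℕ} (hw : ∀ x ∈ w, 1 ≤ x ∧ x ≤ c) {p : ℕ}
    (hp : p ≤ c) : w.Sublist (List.range' (p + 1) (c - p) ++ upSeq c (weakDescents p w)) := by
  induction w generalizing p with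
  | nil => exact List.nil_sublist _
  | cons b t ih =>
    obtain ⟨hb1, hbc⟩ := hw b (by simp)
    have htail := ih (fun x hx => hw x (by simp [hx])) hbc
    have hfrom : ∀ q < b, (b :: t).Sublist
        (List.range' (q + 1) (c - q) ++ upSeq c (weakDescents b t)) := fun q hq => by
      rw [List.range'_eq_append_cons (b := b) (by omega) (by omega), List.append_assoc]
      refine List.Sublist.trans ?_ (List.sublist_append_right _ _)
      simpa [show q + 1 + (c - q) - (b + 1) = c - b by omega] using htail.cons_cons b
    simp only [weakDescents]
    split_ifs with hbp
    · rw [add_comm 1, upSeq_succ, ← List.append_assoc]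
      exact (hfrom 0 (by omega)).trans
        ((List.sublist_append_right _ _).append_right _)
    · rw [zero_add]
      exact hfrom p (by omega)

lemma sublist_upSeq_weakDescents {c : ℕ} {w : List ℕ} (hw : ∀ x ∈ w, 1 ≤ x ∧ x ≤ c) :
    w.Sublist (upSeq c (weakDescents c w)) := by
  simpa using sublist_range'_append_upSeq hw le_rfl

end UpSeq

section Blocks

/-- The cost of each copy of `W` after the first in `W W W ⋯`. -/
def cyclicDescents (W : List ℕ) : ℕ := weakDescents (W.getLastD 0) W

/-- The extra cost of entering `W` from a letter `≥` its head rather than from its own last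
letter. -/
def wrapAscent (W : List ℕ) : ℕ := if W.getLastD 0 < W.headD 0 then 1 else 0

/-- `altRep W [e₁, e₂, e₃, …] = W^{e₁} (reverse W)^{e₂} W^{e₃} ⋯`. -/
def altRep : List ℕ → List ℕ → List ℕ
  | _, [] => []
  | W, k :: e => rep W k ++ altRep W.reverse e

def evenSum : List ℕ → ℕ
  | [] => 0
  | [k] => k
  | k :: _ :: e => k + evenSum e

def oddSum (e : List ℕ) : ℕ := evenSum e.tail

lemma evenSum_cons (k : ℕ) (e : List ℕ) : evenSum (k :: e) = k + oddSum e := by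
  cases e <;> rfl

lemma oddSum_cons (k : ℕ) (e : List ℕ) : oddSum (k :: e) = evenSum e := rfl

lemma weakDescents_of_headD_le {W : List ℕ} (hW : W ≠ []) {p : ℕ} (hp : W.headD 0 ≤ p) :
    weakDescents p W = cyclicDescents W + wrapAscent W := by
  obtain ⟨a, t, rfl⟩ := List.exists_cons_of_ne_nil hW
  simp only [List.headD_cons] at hp
  simp only [cyclicDescents, wrapAscent, weakDescents, List.headD_cons, if_pos hp]
  grind

lemma weakDescents_rep_append {W : List ℕ} (hW : W ≠ []) (k : ℕ) (rest : List ℕ) :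
    weakDescents (W.getLastD 0) (rep W k ++ rest) =
      k * cyclicDescents W + weakDescents (W.getLastD 0) rest := by
  induction k with
  | zero => simp [rep]
  | succ k ih =>
    rw [rep_succ, List.append_assoc, weakDescents_append,
      W.getLastD_eq_of_ne_nil hW (W.getLastD 0) 0, ih,
      cyclicDescents]
    ring

lemma weakDescents_altRep {W : List ℕ} (hW : W ≠ []) {e : List ℕ} (he : ∀ k ∈ e, 0 < k) {p : ℕ}
    (hp : W.headD 0 ≤ p) :
    weakDescents p (altRep W e) =
      evenSum e * cyclicDescents W + oddSum e * cyclicDescents W.reverse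
        + (e.length + 1) / 2 * wrapAscent W + e.length / 2 * wrapAscent W.reverse := by
  induction e generalizing W p with
  | nil => simp [altRep, weakDescents, evenSum, oddSum]
  | cons k e ih =>
    obtain ⟨j, rfl⟩ := Nat.exists_eq_add_one_of_ne_zero (he k (by simp)).ne'
    have hW' : W.reverse ≠ [] := by simpa using hW
    have htail := ih hW' (fun x hx => he x (by simp [hx]))
      (p := W.getLastD 0) (W.headD_reverse 0).le
    rw [altRep, rep_succ, List.append_assoc, weakDescents_append, weakDescents_of_headD_le hW hp,
      W.getLastD_eq_of_ne_nil hW _ 0, weakDescents_rep_append hW, htail, List.reverse_reverse,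
      evenSum_cons, oddSum_cons, List.length_cons,
      show (e.length + 1 + 1) / 2 = e.length / 2 + 1 by omega]
    ring

lemma weakDescents_add_weakDescents_reverse :
    ∀ {w : List ℕ}, w.IsChain (· ≠ ·) → w ≠ [] → ∀ p q : ℕ,
      weakDescents p w + weakDescents q w.reverse =
        (if w.headD 0 ≤ p then 1 else 0) + (if w.getLastD 0 ≤ q then 1 else 0) + (w.length - 1)
  | [a], _, _, p, q => by simp [weakDescents]
  | a :: b :: s, hw, _, p, q => by
    have ih := weakDescents_add_weakDescents_reverse (List.isChain_cons_cons.1 hw).2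
      (List.cons_ne_nil b s) a q
    have hab := (List.isChain_cons_cons.1 hw).1
    rw [List.reverse_cons, weakDescents_append, List.getLastD_reverse]
    simp only [weakDescents, List.headD_cons, List.getLastD_cons, List.length_cons] at ih ⊢
    grind

lemma headD_ne_getLastD {W : List ℕ} (hW : W.Nodup) (h2 : 2 ≤ W.length) :
    W.headD 0 ≠ W.getLastD 0 := by
  obtain ⟨a, b, s, rfl⟩ : ∃ a b s, W = a :: b :: s := by
    match W, h2 with
    | a :: b :: s, _ => exact ⟨a, b, s, rfl⟩
  rw [List.headD_cons, List.getLastD_cons]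
  intro h
  exact (List.nodup_cons.1 hW).1 (h ▸ (b :: s).getLastD_mem (List.cons_ne_nil b s) a)

lemma cyclicDescents_add_reverse {W : List ℕ} (hW : W.Nodup) (h2 : 2 ≤ W.length) :
    cyclicDescents W + cyclicDescents W.reverse = W.length := by
  have hne : W ≠ [] := by rintro rfl; simp at h2
  have := headD_ne_getLastD hW h2
  rw [cyclicDescents, cyclicDescents, List.getLastD_reverse,
    weakDescents_add_weakDescents_reverse hW.isChain hne]
  split_ifs <;> omega

lemma wrapAscent_add_reverse {W : List ℕ} (hW : W.Nodup) (h2 : 2 ≤ W.length) :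
    wrapAscent W + wrapAscent W.reverse = 1 := by
  have := headD_ne_getLastD hW h2
  simp only [wrapAscent, List.headD_reverse, List.getLastD_reverse]
  split_ifs <;> omega

lemma one_le_cyclicDescents {W : List ℕ} (hW : W ≠ []) : 1 ≤ cyclicDescents W := by
  by_contra! h
  have := lt_of_weakDescents_eq_zero (Nat.lt_one_iff.1 h) _ (W.getLastD_mem hW 0)
  exact lt_irrefl _ this

end Blocks

lemma sub_one_mul_min_add_max_le {a b x y : ℕ} (hx : 1 ≤ x) (hy : 1 ≤ y) :
    (x + y - 1) * min a b + max a b ≤ a * x + b * y := by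
  obtain ⟨x, rfl⟩ := Nat.exists_eq_add_of_le' hx
  obtain ⟨y, rfl⟩ := Nat.exists_eq_add_of_le' hy
  rw [show x + 1 + (y + 1) - 1 = x + y + 1 by omega]
  rcases le_total a b with h | h
  · rw [min_eq_left h, max_eq_right h]
    nlinarith [Nat.mul_le_mul_left y h]
  · rw [min_eq_right h, max_eq_left h]
    nlinarith [Nat.mul_le_mul_left x h]

lemma le_weakDescents_altRep {U : List ℕ} (hU : U.Nodup) (h2 : 2 ≤ U.length) {e : List ℕ}
    (he : ∀ k ∈ e, 0 < k) {p : ℕ} (hp : U.headD 0 ≤ p) :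
    (U.length - 1) * min (evenSum e) (oddSum e) + max (evenSum e) (oddSum e) + e.length / 2 ≤
      weakDescents p (altRep U e) := by
  have hne : U ≠ [] := by rintro rfl; simp at h2
  rw [weakDescents_altRep hne he hp, ← cyclicDescents_add_reverse hU h2]
  have hcyc := sub_one_mul_min_add_max_le (a := evenSum e) (b := oddSum e)
    (one_le_cyclicDescents hne) (one_le_cyclicDescents (List.reverse_ne_nil_iff.2 hne))
  -- the odd-numbered blocks are at least as many as the even-numbered ones
  have hwrap : e.length / 2 ≤
      (e.length + 1) / 2 * wrapAscent U + e.length / 2 * wrapAscent U.reverse := by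
    calc e.length / 2 = e.length / 2 * wrapAscent U + e.length / 2 * wrapAscent U.reverse := by
          rw [← mul_add, wrapAscent_add_reverse hU h2, mul_one]
      _ ≤ _ := by gcongr; omega
  linarith

section AltBlocks

lemma altBlocks_eq_altRep (c : ℕ) (e : List ℕ) : altBlocks c e = altRep (Ic c) e := by
  suffices ∀ n, (((e.zipIdx n).map Prod.swap).map
      (fun p => rep (if p.1 % 2 = 0 then Ic c else Dc c) p.2)).flatten =
        altRep (if n % 2 = 0 then Ic c else Dc c) e from this 0
  induction e with
  | nil => simp [altRep]
  | cons k e ih =>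
    intro n
    rw [List.zipIdx_cons, List.map_cons, List.map_cons, List.flatten_cons, ih, altRep]
    rcases Nat.mod_two_eq_zero_or_one n with h | h <;>
      simp [h, Nat.add_mod, Dc]

lemma map_altRep (f : ℕ → ℕ) (W e : List ℕ) : (altRep W e).map f = altRep (W.map f) e := by
  induction e generalizing W with
  | nil => rfl
  | cons k e ih => simp [altRep, map_rep, ih]

lemma mem_of_mem_altRep {W e : List ℕ} {x : ℕ} (hx : x ∈ altRep W e) : x ∈ W := by
  induction e generalizing W with
  | nil => simp [altRep] at hx
  | cons k e ih =>
    rcases List.mem_append.1 hx with hx | hx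
    · simp [rep] at hx
      exact hx.2
    · simpa using ih hx

lemma sum_filter_zipIdx (e : List ℕ) (n : ℕ) :
    ((((e.zipIdx n).map Prod.swap).filter (fun p => p.1 % 2 = n % 2)).map Prod.snd).sum =
        evenSum e ∧
      ((((e.zipIdx n).map Prod.swap).filter (fun p => p.1 % 2 = (n + 1) % 2)).map Prod.snd).sum =
        oddSum e := by
  induction e generalizing n with
  | nil => simp [evenSum, oddSum]
  | cons k e ih =>
    obtain ⟨ih₁, ih₂⟩ := ih (n + 1)
    rw [show (n + 1 + 1) % 2 = n % 2 by omega] at ih₂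
    have hne : n % 2 ≠ (n + 1) % 2 := by omega
    simp [List.zipIdx_cons, evenSum_cons, oddSum_cons, ih₁, ih₂, hne]

lemma sum_filter_even (e : List ℕ) :
    (((e.zipIdx.map Prod.swap).filter (fun p => p.1 % 2 = 0)).map Prod.snd).sum = evenSum e :=
  (sum_filter_zipIdx e 0).1

lemma sum_filter_odd (e : List ℕ) :
    (((e.zipIdx.map Prod.swap).filter (fun p => p.1 % 2 = 1)).map Prod.snd).sum = oddSum e :=
  (sum_filter_zipIdx e 0).2

end AltBlocks

lemma le_of_contains_upSeq_altRep {c k : ℕ} (hc : 2 ≤ c) {e : List ℕ} (he : ∀ x ∈ e, 0 < x)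
    (h : Contains (upSeq c k) (altRep (Ic c) e)) :
    (c - 1) * min (evenSum e) (oddSum e) + max (evenSum e) (oddSum e) + e.length / 2 ≤ k := by
  obtain ⟨f, hf, hsub⟩ := h
  rw [map_altRep] at hsub
  set U := (Ic c).map f
  have hlen : U.length = c := by simp [U, Ic]
  have hnodup : U.Nodup := (List.nodup_range' (s := 1) (n := c)).map hf
  -- any start `p ≥ 1` sees exactly `k` weak descents in `up(c, k)`, so start above the head of `U`
  calc _ ≤ weakDescents (U.headD 0 + 1) (altRep U e) :=
        hlen ▸ le_weakDescents_altRep hnodup (by omega) he (Nat.le_succ _)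
    _ ≤ weakDescents (U.headD 0 + 1) (upSeq c k) := weakDescents_mono hsub _
    _ = k := weakDescents_upSeq (by omega) (by omega) k

section Witnesses

lemma contains_upSeq_altRep {c : ℕ} {f : ℕ → ℕ} (hf : Function.Injective f)
    (hfc : Set.MapsTo f (Set.Icc 1 c) (Set.Icc 1 c)) (e : List ℕ) :
    Contains (upSeq c (weakDescents c (altRep ((Ic c).map f) e))) (altRep (Ic c) e) := by
  refine ⟨f, hf, ?_⟩
  rw [map_altRep]
  refine sublist_upSeq_weakDescents fun y hy => ?_
  obtain ⟨x, hx, rfl⟩ := List.mem_map.1 (mem_of_mem_altRep hy)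
  exact hfc (by simp only [Ic, List.mem_range'] at hx; grind)

lemma headD_Ic {c : ℕ} (hc : 1 ≤ c) : (Ic c).headD 0 = 1 := by
  obtain ⟨n, rfl⟩ := Nat.exists_eq_add_of_le' hc
  simp [Ic, List.range'_succ]

lemma weakDescents_altRep_Ic {c : ℕ} (hc : 2 ≤ c) {e : List ℕ} (he : ∀ k ∈ e, 0 < k) :
    weakDescents c (altRep (Ic c) e) = evenSum e + (c - 1) * oddSum e + e.length / 2 := by
  have hnodup : (Ic c).Nodup := List.nodup_range'
  have hlen : (Ic c).length = c := List.length_range'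
  have hcyc : cyclicDescents (Ic c) = 1 := by
    rw [cyclicDescents, getLastD_Ic (by omega), Ic, weakDescents_range' (by omega) (by omega)]
  have hwrap : wrapAscent (Ic c) = 0 := by
    rw [wrapAscent, getLastD_Ic (by omega), headD_Ic (by omega), if_neg (by omega)]
  have hcyc' := cyclicDescents_add_reverse hnodup (by omega)
  have hwrap' := wrapAscent_add_reverse hnodup (by omega)
  rw [weakDescents_altRep (List.ne_nil_of_length_pos (by omega)) he
      ((headD_Ic (by omega)).trans_le (by omega)), hcyc, hwrap,
    show cyclicDescents (Ic c).reverse = c - 1 by omega,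
    show wrapAscent (Ic c).reverse = 1 by omega]
  ring

/-- Turns `I_c` into `(c-1) ⋯ 2 1 c`. -/
def reverseBelow (c x : ℕ) : ℕ := if 1 ≤ x ∧ x < c then c - x else x

lemma reverseBelow_injective (c : ℕ) : Function.Injective (reverseBelow c) := by
  intro x y h
  unfold reverseBelow at h
  split_ifs at h <;> omega

lemma reverseBelow_mapsTo (c : ℕ) : Set.MapsTo (reverseBelow c) (Set.Icc 1 c) (Set.Icc 1 c) := by
  intro x hx
  simp only [Set.mem_Icc, reverseBelow] at *
  split_ifs <;> omega

lemma map_reverseBelow_Ic {c : ℕ} (hc : 1 ≤ c) :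
    (Ic c).map (reverseBelow c) = (c :: Ic (c - 1)).reverse := by
  obtain ⟨n, rfl⟩ := Nat.exists_eq_add_of_le' hc
  have hbelow : (List.range' 1 n).map (reverseBelow (n + 1)) = (List.range' 1 n).reverse := by
    rw [List.reverse_range', List.range'_eq_map_range, List.map_map]
    refine List.map_congr_left fun x hx => ?_
    simp only [List.mem_range] at hx
    simp only [Function.comp, reverseBelow]
    rw [if_pos (by omega)]
    omega
  rw [Ic, List.range'_concat, List.map_append, hbelow, Ic, Nat.add_sub_cancel, List.reverse_cons]
  simp [reverseBelow]
  omega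

lemma weakDescents_altRep_reverseBelow {c : ℕ} (hc : 2 ≤ c) {e : List ℕ}
    (he : ∀ k ∈ e, 0 < k) :
    weakDescents c (altRep ((Ic c).map (reverseBelow c)) e) =
      (c - 1) * evenSum e + oddSum e + e.length / 2 := by
  have hnodup : ((Ic c).map (reverseBelow c)).Nodup :=
    (List.nodup_range' (s := 1) (n := c)).map (reverseBelow_injective c)
  have hlen : ((Ic c).map (reverseBelow c)).length = c := by simp [Ic]
  rw [map_reverseBelow_Ic (by omega)] at hnodup hlen ⊢
  set V := c :: Ic (c - 1) with hV
  have hlast : V.getLastD 0 = c - 1 := by rw [hV, List.getLastD_cons, getLastD_Ic (by omega)]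
  have hcyc : cyclicDescents V = 1 := by
    rw [cyclicDescents, hlast, hV, weakDescents, if_neg (by omega), Ic,
      weakDescents_range' (by omega) (by omega)]
  have hwrap : wrapAscent V = 1 := by
    rw [wrapAscent, hlast, hV, List.headD_cons, if_pos (by omega)]
  have hcyc' := cyclicDescents_add_reverse hnodup (by omega)
  have hwrap' := wrapAscent_add_reverse hnodup (by omega)
  rw [List.reverse_reverse] at hcyc' hwrap'
  rw [weakDescents_altRep (List.ne_nil_of_length_pos (by omega)) he
      (by rw [List.headD_reverse, hlast]; omega), List.reverse_reverse, hcyc, hwrap,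
    show cyclicDescents V.reverse = c - 1 by omega, show wrapAscent V.reverse = 0 by omega]
  ring

end Witnesses

theorem stmt13_general (c : ℕ) (hc : 2 ≤ c) (e : List ℕ) (he : ∀ x ∈ e, 0 < x) :
    lval c (altBlocks c e) =
      (c - 1) * min ((((e.zipIdx.map Prod.swap).filter (fun p => p.1 % 2 = 0)).map Prod.snd).sum)
                    ((((e.zipIdx.map Prod.swap).filter (fun p => p.1 % 2 = 1)).map Prod.snd).sum)
        + max ((((e.zipIdx.map Prod.swap).filter (fun p => p.1 % 2 = 0)).map Prod.snd).sum)
              ((((e.zipIdx.map Prod.swap).filter (fun p => p.1 % 2 = 1)).map Prod.snd).sum)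
        + e.length / 2 := by
  rw [lval, sum_filter_even, sum_filter_odd, altBlocks_eq_altRep]
  refine IsLeast.csInf_eq ⟨?_, fun k hk => le_of_contains_upSeq_altRep hc he hk⟩
  rcases le_total (oddSum e) (evenSum e) with h | h
  · rw [min_eq_right h, max_eq_left h, add_comm ((c - 1) * oddSum e)]
    have hid := contains_upSeq_altRep Function.injective_id (Set.mapsTo_id (Set.Icc 1 c)) e
    rwa [List.map_id, weakDescents_altRep_Ic hc he] at hid
  · rw [min_eq_left h, max_eq_right h]
    have hrev := contains_upSeq_altRep (reverseBelow_injective c) (reverseBelow_mapsTo c) e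
    rwa [weakDescents_altRep_reverseBelow hc he] at hrev

theorem stmt13 (c : ℕ) (hc : 2 ≤ c) (e : List ℕ) (he : ∀ x ∈ e, 0 < x)
    (hne : e ≠ []) :
    lval c (altBlocks c e) =
      (c - 1) * min ((((e.zipIdx.map Prod.swap).filter (fun p => p.1 % 2 = 0)).map Prod.snd).sum)
                    ((((e.zipIdx.map Prod.swap).filter (fun p => p.1 % 2 = 1)).map Prod.snd).sum)
        + max ((((e.zipIdx.map Prod.swap).filter (fun p => p.1 % 2 = 0)).map Prod.snd).sum)
              ((((e.zipIdx.map Prod.swap).filter (fun p => p.1 % 2 = 1)).map Prod.snd).sum)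
        + e.length / 2 :=
  stmt13_general c hc e he
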